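/- arXiv:2104.11275 — 2 statements merged into one kernel-verified Lean document; each statement's English description precedes it below -/
import Mathlib

section
/- Let ε ∈ (0,1), ℓ ≥ 2, and p^{(i)} = ε^{ℓ−i}/(Σ_j ε^{ℓ−j}) for i ∈ [ℓ]. Suppose reals u₁,...,u_ℓ and q₁,...,q_ℓ satisfy: (i) 0 ≤ u_t ≤ ε^{t−1} for all t; (ii) q_{t+1} ≤ u_{t+1} for all t < ℓ and q_ℓ ≤ u_ℓ; (iii) u_{t+1}/ε − q_{t+1} ≤ u_t − q_t for all t < ℓ. Then Σ_{t=1}^{ℓ} p^{(t)} q_t ≤ p^{(1)} + ε·Σ_{t=2}^{ℓ} p^{(t)} ε^{t−1}, and hence Σ_t p^{(t)} q_t ≤ (ε + 1/ℓ)·Σ_{t=1}^{ℓ} p^{(t)} ε^{t−1}. -/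
open Finset

private lemma sum_split_left (a b : ℕ) (h : a ≤ b) (f : ℕ → ℝ) :
    ∑ s ∈ Finset.Icc a b, f s = f a + ∑ s ∈ Finset.Icc (a+1) b, f s := by
  rw [Finset.Icc_add_one_left_eq_Ioc, Finset.Icc_eq_cons_Ioc h, Finset.sum_cons]

/-- With p^{(i)} = ε^{ℓ−i}/Σ_j ε^{ℓ−j}, suppose u_t, q_t satisfy
(i) 0 ≤ u_t ≤ ε^{t−1}; (ii) q_{t+1} ≤ u_{t+1} for t < ℓ and q_ℓ ≤ u_ℓ (IR);
(iii) u_{t+1}/ε − q_{t+1} ≤ u_t − q_t for t < ℓ (IC).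
Then Σ_t p^{(t)} q_t ≤ p^{(1)} + ε·Σ_{t≥2} p^{(t)} ε^{t−1}, and hence
Σ_t p^{(t)} q_t ≤ (ε + 1/ℓ)·Σ_t p^{(t)} ε^{t−1}. -/
theorem stmt_6 (ℓ : ℕ) (hℓ : 2 ≤ ℓ) (ε : ℝ) (hε : ε ∈ Set.Ioo (0:ℝ) 1)
    (p u q : ℕ → ℝ)
    (hp : ∀ i ∈ Finset.Icc 1 ℓ,
      p i = ε ^ (ℓ - i) / ∑ j ∈ Finset.Icc 1 ℓ, ε ^ (ℓ - j))
    (hu : ∀ t ∈ Finset.Icc 1 ℓ, 0 ≤ u t ∧ u t ≤ ε ^ (t - 1))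
    (hIR : ∀ t ∈ Finset.Icc 2 ℓ, q t ≤ u t)
    (hIC : ∀ t ∈ Finset.Ico 1 ℓ, u (t + 1) / ε - q (t + 1) ≤ u t - q t) :
    (∑ t ∈ Finset.Icc 1 ℓ, p t * q t
        ≤ p 1 + ε * ∑ t ∈ Finset.Icc 2 ℓ, p t * ε ^ (t - 1)) ∧
    (∑ t ∈ Finset.Icc 1 ℓ, p t * q t
        ≤ (ε + 1 / ℓ) * ∑ t ∈ Finset.Icc 1 ℓ, p t * ε ^ (t - 1)) := by
  obtain ⟨hε0, hε1⟩ := hε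
  set S := ∑ j ∈ Finset.Icc 1 ℓ, ε ^ (ℓ - j) with hS
  have hSpos : 0 < S := by
    apply Finset.sum_pos (fun j _ => pow_pos hε0 _)
    exact ⟨1, by simp; omega⟩
  -- key downward induction D
  have keyD : ∀ k t, 1 ≤ t → t ≤ ℓ → ℓ - t = k →
      q t ≤ u t - (1/ε - 1) * ∑ s ∈ Finset.Icc (t+1) ℓ, u s := by
    intro k
    induction k with
    | zero =>
      intro t h1 h2 h3
      have ht : t = ℓ := by omega
      subst ht
      have : Finset.Icc (t+1) t = ∅ := by simp
      rw [this]
      simpa using hIR t (by simp [Finset.mem_Icc]; omega)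
    | succ n ih =>
      intro t h1 h2 h3
      have ht : t < ℓ := by omega
      have hIC' := hIC t (by simp [Finset.mem_Ico]; omega)
      have hD := ih (t+1) (by omega) (by omega) (by omega)
      have hsplit := sum_split_left (t+1) ℓ (by omega) u
      set T2 := ∑ s ∈ Finset.Icc (t+2) ℓ, u s
      have hring : (1/ε - 1) * (u (t+1) + T2)
          = u (t+1)/ε - u (t+1) + (1/ε - 1) * T2 := by ring
      rw [hsplit, hring]
      linarith
  -- key downward induction E
  have keyE : ∀ k t, 1 ≤ t → t ≤ ℓ → ℓ - t = k →
      ∑ s ∈ Finset.Icc t ℓ, ε ^ (ℓ - s) * q s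
        ≤ ε ^ (ℓ - t) * ∑ s ∈ Finset.Icc t ℓ, u s := by
    intro k
    induction k with
    | zero =>
      intro t h1 h2 h3
      have ht : t = ℓ := by omega
      subst ht
      simp only [Finset.Icc_self, Finset.sum_singleton]
      exact mul_le_mul_of_nonneg_left (hIR t (by simp [Finset.mem_Icc]; omega))
        (le_of_lt (pow_pos hε0 _))
    | succ n ih =>
      intro t h1 h2 h3
      have ht : t < ℓ := by omega
      have hE := ih (t+1) (by omega) (by omega) (by omega)
      have hD := keyD (n+1) t h1 h2 h3
      have hq := sum_split_left t ℓ (by omega) (fun s => ε ^ (ℓ - s) * q s)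
      have hus := sum_split_left t ℓ (by omega) u
      rw [hq, hus]
      set T := ∑ s ∈ Finset.Icc (t+1) ℓ, u s with hT
      have hTnn : 0 ≤ T := Finset.sum_nonneg (fun s hs => by
        have := hu s (by simp [Finset.mem_Icc] at hs ⊢; omega)
        exact this.1)
      rw [show ℓ - (t+1) = n by omega] at hE
      rw [show ℓ - t = n + 1 from h3]
      have hq_t : ε ^ (n+1) * q t ≤ ε ^ (n+1) * (u t - (1/ε - 1) * T) :=
        mul_le_mul_of_nonneg_left hD (le_of_lt (pow_pos hε0 _))
      have hkey : ε ^ (n+1) * (u t - (1/ε - 1) * T)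
          = ε ^ (n+1) * u t - ε ^ n * T + ε ^ (n+1) * T := by
        field_simp
        ring
      have hexp : ε ^ (n+1) * (u t + T) = ε ^ (n+1) * u t + ε ^ (n+1) * T := by ring
      linarith
  have hmain := keyE (ℓ - 1) 1 le_rfl (by omega) rfl
  -- Σ u_t ≤ 1 + (ℓ-1) ε
  have husum : ∑ t ∈ Finset.Icc 1 ℓ, u t ≤ 1 + ((ℓ:ℝ) - 1) * ε := by
    have h1 : ∑ t ∈ Finset.Icc 1 ℓ, u t ≤ ∑ t ∈ Finset.Icc 1 ℓ, ε ^ (t - 1) :=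
      Finset.sum_le_sum (fun t htm => (hu t htm).2)
    have h2 : ∑ t ∈ Finset.Icc 1 ℓ, ε ^ (t-1)
        = ε ^ (1-1) + ∑ t ∈ Finset.Icc 2 ℓ, ε ^ (t-1) :=
      sum_split_left 1 ℓ (by omega) (fun t => ε ^ (t-1))
    have h3 : ∑ t ∈ Finset.Icc 2 ℓ, ε ^ (t-1) ≤ ∑ t ∈ Finset.Icc 2 ℓ, ε := by
      apply Finset.sum_le_sum
      intro t htm
      simp only [Finset.mem_Icc] at htm
      calc ε ^ (t-1) ≤ ε ^ 1 :=
            pow_le_pow_of_le_one hε0.le hε1.le (by omega)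
        _ = ε := pow_one ε
    have h4 : ∑ t ∈ Finset.Icc 2 ℓ, ε = ((ℓ:ℝ) - 1) * ε := by
      rw [Finset.sum_const, Nat.card_Icc]
      have : ((ℓ + 1 - 2 : ℕ) : ℝ) = (ℓ:ℝ) - 1 := by
        have : ℓ + 1 - 2 = ℓ - 1 := by omega
        rw [this, Nat.cast_sub (by omega)]
        simp
      rw [nsmul_eq_mul, this]
    simp only [h2] at h1
    simp at h1
    linarith
  -- rewrite LHS
  have hlhs : ∑ t ∈ Finset.Icc 1 ℓ, p t * q t
      = (∑ t ∈ Finset.Icc 1 ℓ, ε ^ (ℓ - t) * q t) / S := by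
    rw [Finset.sum_div]
    apply Finset.sum_congr rfl
    intro t htm
    rw [hp t htm]
    ring
  -- p t * ε^(t-1) = ε^(ℓ-1)/S on Icc 1 ℓ
  have hpe : ∀ t ∈ Finset.Icc 1 ℓ, p t * ε ^ (t - 1) = ε ^ (ℓ - 1) / S := by
    intro t htm
    simp only [Finset.mem_Icc] at htm
    rw [hp t (by simp [Finset.mem_Icc]; omega)]
    rw [div_mul_eq_mul_div, ← pow_add]
    congr 2
    omega
  have hp1 : p 1 = ε ^ (ℓ - 1) / S := by
    rw [hp 1 (by simp [Finset.mem_Icc]; omega)]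
  have hpepos : 0 < ε ^ (ℓ - 1) / S := div_pos (pow_pos hε0 _) hSpos
  have hbound : ∑ t ∈ Finset.Icc 1 ℓ, p t * q t
      ≤ (ε ^ (ℓ - 1) / S) * (1 + ((ℓ:ℝ) - 1) * ε) := by
    rw [hlhs]
    have h5 : (∑ t ∈ Finset.Icc 1 ℓ, ε ^ (ℓ - t) * q t) / S
        ≤ (ε ^ (ℓ - 1) * ∑ t ∈ Finset.Icc 1 ℓ, u t) / S :=
      div_le_div_of_nonneg_right ?_ hSpos.le
    · calc (∑ t ∈ Finset.Icc 1 ℓ, ε ^ (ℓ - t) * q t) / S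
          ≤ (ε ^ (ℓ - 1) * ∑ t ∈ Finset.Icc 1 ℓ, u t) / S := h5
        _ ≤ (ε ^ (ℓ - 1) / S) * (1 + ((ℓ:ℝ) - 1) * ε) := by
            rw [div_mul_eq_mul_div, mul_comm (ε ^ (ℓ-1))]
            apply div_le_div_of_nonneg_right ?_ hSpos.le
            rw [mul_comm]
            exact mul_le_mul_of_nonneg_left husum (le_of_lt (pow_pos hε0 _))
    · exact hmain
  constructor
  · -- first goal
    have hsum2 : ∑ t ∈ Finset.Icc 2 ℓ, p t * ε ^ (t - 1)
        = ((ℓ:ℝ) - 1) * (ε ^ (ℓ - 1) / S) := by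
      rw [Finset.sum_congr rfl (fun t htm => hpe t (by
        simp only [Finset.mem_Icc] at htm ⊢; omega))]
      rw [Finset.sum_const, Nat.card_Icc, nsmul_eq_mul]
      congr 1
      have : ℓ + 1 - 2 = ℓ - 1 := by omega
      rw [this, Nat.cast_sub (by omega)]
      simp
    rw [hsum2, hp1]
    nlinarith [hbound]
  · -- second goal
    have hsum1 : ∑ t ∈ Finset.Icc 1 ℓ, p t * ε ^ (t - 1)
        = (ℓ:ℝ) * (ε ^ (ℓ - 1) / S) := by
      rw [Finset.sum_congr rfl hpe, Finset.sum_const, Nat.card_Icc, nsmul_eq_mul]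
      norm_num
    rw [hsum1]
    have hℓpos : (0:ℝ) < (ℓ:ℝ) := by positivity
    have : (ε + 1 / (ℓ:ℝ)) * ((ℓ:ℝ) * (ε ^ (ℓ - 1) / S))
        = (1 + (ℓ:ℝ) * ε) * (ε ^ (ℓ - 1) / S) := by
      field_simp
      ring
    rw [this]
    nlinarith [hbound, hpepos, hε0]
end

section
/- Under the hypotheses of the previous statement, the average revenue (q₀ + q₁)/2 is at most [4/((4−2γ))] · (4/5) · [(3/2 + 1)/2], i.e., the ratio (q₀+q₁) / (3/2 + 1) ≤ 4/((4−2γ)·(5/2)) = 8/(5(4−2γ)); in particular as γ → 0 this ratio tends to 4/5. -/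
/-- Under the hypotheses of Statement 8, the average revenue (q₀+q₁)/2
is at most [4/(4−2γ)]·(4/5)·[(3/2+1)/2]; equivalently the ratio of revenue to the
full welfare 3/2 + 1 = 5/2 is at most 16/(5(4−2γ)), which tends to 4/5 as γ → 0. -/
theorem stmt_9 (γ p₀ p₁ u₀ u₁ q₀ q₁ : ℝ) (hγ : γ ∈ Set.Ioo (0:ℝ) 1)
    (hp₀ : p₀ ∈ Set.Icc (0:ℝ) 1) (hp₁ : p₁ ∈ Set.Icc (0:ℝ) 1)
    (hu₀ : u₀ ∈ Set.Icc (0:ℝ) (1 / (2 - γ))) (hu₁ : u₁ ∈ Set.Icc (0:ℝ) (1 / (2 - γ)))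
    (hIR : q₁ ≤ p₁ / 2 + u₁) (hIC : p₁ + u₁ - q₁ ≤ p₀ + u₀ - q₀) :
    (q₀ + q₁) / 2 ≤ (4 / (4 - 2 * γ)) * (4 / 5) * ((3 / 2 + 1) / 2) ∧
    (q₀ + q₁) / (3 / 2 + 1) ≤ 16 / (5 * (4 - 2 * γ)) ∧
    Filter.Tendsto (fun g : ℝ => 16 / (5 * (4 - 2 * g))) (nhds 0) (nhds (4 / 5)) := by
  obtain ⟨hγ0, hγ1⟩ := hγ
  have h2 : (0:ℝ) < 2 - γ := by linarith
  have hu0' : u₀ ≤ 1 / (2 - γ) := hu₀.2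
  have hu1' : u₁ ≤ 1 / (2 - γ) := hu₁.2
  have key : q₀ + q₁ ≤ 4 / (2 - γ) := by
    have h1 : (1:ℝ) / (2 - γ) * (2 - γ) = 1 := by field_simp
    have h4 : (4:ℝ) / (2 - γ) * (2 - γ) = 4 := by field_simp
    have hsum : q₀ + q₁ ≤ p₀ + u₀ + u₁ := by linarith [hp₁.1]
    rw [le_div_iff₀ h2]
    nlinarith [hp₀.2, hu0', hu1']
  refine ⟨?_, ?_, ?_⟩
  · have : (4 / (4 - 2 * γ)) * (4 / 5) * ((3 / 2 + 1) / 2) = 2 / (2 - γ) := by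
      rw [show (4:ℝ) - 2 * γ = 2 * (2 - γ) by ring]
      field_simp; ring
    rw [this]
    have h42 : (4:ℝ) / (2 - γ) = 2 * (2 / (2 - γ)) := by ring
    linarith
  · have : (16:ℝ) / (5 * (4 - 2 * γ)) = (4 / (2 - γ)) / (3 / 2 + 1) := by
      rw [show (4:ℝ) - 2 * γ = 2 * (2 - γ) by ring]
      field_simp; ring
    rw [this]
    apply div_le_div_of_nonneg_right key (by norm_num) |>.trans_eq rfl
  · have : Filter.Tendsto (fun g : ℝ => 16 / (5 * (4 - 2 * g))) (nhds 0) (nhds (16 / (5 * (4 - 2 * 0)))) := by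
      exact Filter.Tendsto.div tendsto_const_nhds
        ((continuous_const.mul (continuous_const.sub (continuous_const.mul continuous_id))).tendsto 0)
        (by norm_num)
    norm_num at this
    exact this
end
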